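/- arXiv:1305.5836 — 3 statements merged into one kernel-verified Lean document; each statement's English description precedes it below -/
import Mathlib

section
/- Suppose g is six times continuously differentiable on [x-h, x+h] with h > 0. Then there exists ω ∈ (x-h, x+h) such that (1/12)·[g''(x-h) + 10·g''(x) + g''(x+h)] − (1/h²)·[g(x-h) − 2·g(x) + g(x+h)] = (h⁴/240)·g⁽⁶⁾(ω). -/
/-!
Put `U(t) = g(x+t) + g(x-t)`, an even function, and let
`E(t) = t²/12 (U''(t) + 5 U''(0)) - (U(t) - U(0))`, so that `E(h)` is `h²` times the left-hand
side. Evenness of `U` makes `E, E', E'', E'''` vanish at `0`, and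
`E⁽⁴⁾(t) = 2/3 t U⁽⁵⁾(t) + t²/12 U⁽⁶⁾(t)`. Comparing `E` with `t⁶` by Cauchy's mean value theorem
four times gives `h⁶ E⁽⁴⁾(t) = 360 t² E(h)` for some `t ∈ (0, h)`; one cannot go further, since
`E⁽⁵⁾` involves `g⁽⁷⁾`. Instead `U⁽⁵⁾(t) = t U⁽⁶⁾(s)` by the mean value theorem, so `E⁽⁴⁾(t)` is
`t²/12` times the positive combination `8 U⁽⁶⁾(s) + U⁽⁶⁾(t)` of values of `g⁽⁶⁾`, which the
intermediate value theorem collapses to `18 g⁽⁶⁾(ω)`.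
-/

open Set

def IsDerivChainOn (F : ℕ → ℝ → ℝ) (n : ℕ) (s : Set ℝ) : Prop :=
  ∀ k < n, ∀ t ∈ s, HasDerivWithinAt (F k) (F (k + 1) t) s t

namespace IsDerivChainOn

variable {F G : ℕ → ℝ → ℝ} {n : ℕ} {s : Set ℝ}

theorem of_le {m : ℕ} (hF : IsDerivChainOn F n s) (hmn : m ≤ n) : IsDerivChainOn F m s :=
  fun k hk => hF k (hk.trans_le hmn)

theorem add (hF : IsDerivChainOn F n s) (hG : IsDerivChainOn G n s) :
    IsDerivChainOn (fun k u => F k u + G k u) n s :=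
  fun k hk u hu => (hF k hk u hu).add (hG k hk u hu)

theorem comp_const_add {t : Set ℝ} (hF : IsDerivChainOn F n s) (x : ℝ)
    (hmaps : MapsTo (x + ·) t s) : IsDerivChainOn (fun k u => F k (x + u)) n t := by
  intro k hk u hu
  simpa [Function.comp_def] using
    (hF k hk _ (hmaps hu)).comp u ((hasDerivWithinAt_id u t).const_add x) hmaps

theorem comp_const_sub {t : Set ℝ} (hF : IsDerivChainOn F n s) (x : ℝ)
    (hmaps : MapsTo (x - ·) t s) :
    IsDerivChainOn (fun k u => (-1) ^ k * F k (x - u)) n t := by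
  intro k hk u hu
  have := ((hF k hk _ (hmaps hu)).comp u ((hasDerivWithinAt_id u t).const_sub x) hmaps).const_mul
    ((-1 : ℝ) ^ k)
  exact this.congr_deriv (by simp only [pow_succ]; ring)

end IsDerivChainOn

theorem ContDiffOn.isDerivChainOn_iteratedDerivWithin {f : ℝ → ℝ} {s : Set ℝ} {n : ℕ}
    (hf : ContDiffOn ℝ n f s) (hs : UniqueDiffOn ℝ s) :
    IsDerivChainOn (fun k => iteratedDerivWithin k f s) n s := by
  intro k hk t ht
  simp only [iteratedDerivWithin_succ]
  exact ((hf.differentiableOn_iteratedDerivWithin (by exact_mod_cast hk) hs) t ht).hasDerivWithinAt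

theorem exists_cauchy_mean_value_pow {f f' : ℝ → ℝ} {h t : ℝ}
    (hf : ∀ u ∈ Icc 0 h, HasDerivWithinAt f (f' u) (Icc 0 h) u) (hf0 : f 0 = 0)
    (ht : t ∈ Ioc 0 h) (j : ℕ) :
    ∃ s ∈ Ioo 0 t, t ^ (j + 1) * f' s = f t * (j + 1) * s ^ j := by
  have hsub : Icc 0 t ⊆ Icc 0 h := Icc_subset_Icc_right ht.2
  obtain ⟨s, hs, hcauchy⟩ := exists_ratio_hasDerivAt_eq_ratio_slope f f' ht.1
    (fun u hu => ((hf u (hsub hu)).continuousWithinAt).mono hsub)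
    (fun u hu => (hf u (hsub (Ioo_subset_Icc_self hu))).hasDerivAt
      (Icc_mem_nhds hu.1 (hu.2.trans_le ht.2)))
    (fun u => u ^ (j + 1)) (fun u => (j + 1) * u ^ j) (continuous_pow _).continuousOn
    (fun u _ => by simpa using hasDerivAt_pow (j + 1) u)
  refine ⟨s, hs, ?_⟩
  simpa [hf0, mul_assoc] using hcauchy

theorem IsDerivChainOn.exists_iterated_cauchy_mean_value_pow {F : ℕ → ℝ → ℝ} {h : ℝ}
    (hh : 0 < h) (m j : ℕ) (hF : IsDerivChainOn F (m + 1) (Icc 0 h)) (hF0 : ∀ k ≤ m, F k 0 = 0) :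
    ∃ t ∈ Ioo 0 h,
      h ^ (m + 1 + j) * F (m + 1) t = F 0 h * (m + 1 + j).descFactorial (m + 1) * t ^ j := by
  induction m generalizing j with
  | zero =>
    obtain ⟨t, ht, hcauchy⟩ := exists_cauchy_mean_value_pow (hF 0 (by omega))
      (hF0 0 le_rfl) ⟨hh, le_rfl⟩ j
    refine ⟨t, ht, ?_⟩
    simpa [add_comm 1 j] using hcauchy
  | succ m ih =>
    obtain ⟨t, ht, hIH⟩ := ih (j + 1) (hF.of_le (by omega)) (fun k hk => hF0 k (by omega))
    obtain ⟨s, hs, hcauchy⟩ := exists_cauchy_mean_value_pow (hF (m + 1) (by omega))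
      (hF0 (m + 1) le_rfl) ⟨ht.1, ht.2.le⟩ j
    refine ⟨s, ⟨hs.1, hs.2.trans ht.2⟩, ?_⟩
    have hD : ((m + 1 + 1 + j).descFactorial (m + 1 + 1) : ℝ)
        = (j + 1) * (m + 1 + 1 + j).descFactorial (m + 1) := by
      rw [Nat.descFactorial_succ, show m + 1 + 1 + j - (m + 1) = j + 1 by omega]
      push_cast; ring
    rw [show m + 1 + (j + 1) = m + 1 + 1 + j by omega] at hIH
    apply mul_left_cancel₀ (pow_pos ht.1 (j + 1)).ne'
    rw [hD]
    linear_combination h ^ (m + 1 + 1 + j) * hcauchy + (j + 1) * s ^ j * hIH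

/-- With `U k t = g⁽ᵏ⁾(x + t) + (-1)ᵏ g⁽ᵏ⁾(x - t)`, the entry `0` is the function `E` above and
the entries `1, …, 4` are its derivatives, expressed through `U` alone. -/
noncomputable def compactError (U : ℕ → ℝ → ℝ) : ℕ → ℝ → ℝ
  | 0 => fun t => t ^ 2 / 12 * (U 2 t + 5 * U 2 0) - (U 0 t - U 0 0)
  | 1 => fun t => t / 6 * (U 2 t + 5 * U 2 0) + t ^ 2 / 12 * U 3 t - U 1 t
  | 2 => fun t => 5 / 6 * (U 2 0 - U 2 t) + t / 3 * U 3 t + t ^ 2 / 12 * U 4 t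
  | 3 => fun t => -(1 / 2) * U 3 t + t / 2 * U 4 t + t ^ 2 / 12 * U 5 t
  | _ => fun t => t * (2 / 3 * U 5 t + t / 12 * U 6 t)

theorem isDerivChainOn_compactError {U : ℕ → ℝ → ℝ} {s : Set ℝ} (hU : IsDerivChainOn U 6 s) :
    IsDerivChainOn (compactError U) 4 s := by
  intro k hk t ht
  have hU' (i : ℕ) (hi : i < 6 := by norm_num) := hU i hi t ht
  have hid := hasDerivWithinAt_id t s
  have hsq := (hasDerivAt_pow 2 t).hasDerivWithinAt (s := s)
  interval_cases k
  · exact ((hsq.div_const 12).mul ((hU' 2).add_const _)).sub ((hU' 0).sub_const _)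
      |>.congr_deriv (by simp only [compactError]; push_cast; ring)
  · exact (((hid.div_const 6).mul ((hU' 2).add_const _)).add
      ((hsq.div_const 12).mul (hU' 3))).sub (hU' 1)
      |>.congr_deriv (by simp only [compactError, id]; push_cast; ring)
  · exact ((((hU' 2).const_sub _).const_mul _).add ((hid.div_const 3).mul (hU' 3))).add
      ((hsq.div_const 12).mul (hU' 4))
      |>.congr_deriv (by simp only [compactError, id]; push_cast; ring)
  · exact (((hU' 3).const_mul _).add ((hid.div_const 2).mul (hU' 4))).add
      ((hsq.div_const 12).mul (hU' 5))
      |>.congr_deriv (by simp only [compactError, id]; push_cast; ring)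

theorem compactError_zero_of_odd {U : ℕ → ℝ → ℝ} (hU1 : U 1 0 = 0) (hU3 : U 3 0 = 0) :
    ∀ k ≤ 3, compactError U k 0 = 0 := by
  intro k hk
  interval_cases k <;> simp [compactError, hU1, hU3]

theorem IsDerivChainOn.exists_compactError_eq {U : ℕ → ℝ → ℝ} {h : ℝ} (hh : 0 < h)
    (hU : IsDerivChainOn U 6 (Icc 0 h)) (hU1 : U 1 0 = 0) (hU3 : U 3 0 = 0) (hU5 : U 5 0 = 0) :
    ∃ s ∈ Ioo 0 h, ∃ t ∈ Ioo 0 h, 4320 * compactError U 0 h = h ^ 6 * (8 * U 6 s + U 6 t) := by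
  obtain ⟨t, ht, hE⟩ := (isDerivChainOn_compactError hU).exists_iterated_cauchy_mean_value_pow
    hh 3 2 (compactError_zero_of_odd hU1 hU3)
  obtain ⟨s, hs, hU5t⟩ := exists_cauchy_mean_value_pow (hU 5 (by norm_num)) hU5
    ⟨ht.1, ht.2.le⟩ 0
  refine ⟨s, ⟨hs.1, hs.2.trans ht.2⟩, t, ht, ?_⟩
  norm_num [compactError, Nat.descFactorial] at hE hU5t ⊢
  apply mul_left_cancel₀ (pow_pos ht.1 2).ne'
  linear_combination -12 * hE - 8 * h ^ 6 * t * hU5t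

theorem exists_mem_Icc_eq_weighted_average {f : ℝ → ℝ} {a b p q α β : ℝ}
    (hf : ContinuousOn f (Icc a b)) (hp : p ∈ Icc a b) (hq : q ∈ Icc a b) (hα : 0 ≤ α)
    (hβ : 0 ≤ β) (hαβ : 0 < α + β) :
    ∃ c ∈ Icc a b, f c = (α * f p + β * f q) / (α + β) := by
  have hmem : (α * f p + β * f q) / (α + β) ∈ uIcc (f p) (f q) := by
    rw [← segment_eq_uIcc]
    refine ⟨α / (α + β), β / (α + β), by positivity, by positivity, by field_simp, ?_⟩
    simp only [smul_eq_mul]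
    field_simp
  obtain ⟨c, hc, hfc⟩ := intermediate_value_uIcc (hf.mono (uIcc_subset_Icc hp hq)) hmem
  exact ⟨c, uIcc_subset_Icc hp hq hc, hfc⟩

/-- Lemma 2.1 of the paper: the fourth-order compact relation between second
derivatives and the central second difference, with a sixth-derivative
mean-value remainder. -/
theorem compact_second_difference_mean_value
    (g : ℝ → ℝ) (x h : ℝ) (hh : 0 < h)
    (hg : ContDiffOn ℝ 6 g (Set.Icc (x - h) (x + h))) :
    ∃ ω ∈ Set.Ioo (x - h) (x + h),
      (1 / 12) * (iteratedDerivWithin 2 g (Set.Icc (x - h) (x + h)) (x - h)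
          + 10 * iteratedDerivWithin 2 g (Set.Icc (x - h) (x + h)) x
          + iteratedDerivWithin 2 g (Set.Icc (x - h) (x + h)) (x + h))
        - (1 / h ^ 2) * (g (x - h) - 2 * g x + g (x + h))
      = (h ^ 4 / 240) * iteratedDerivWithin 6 g (Set.Icc (x - h) (x + h)) ω := by
  set I := Icc (x - h) (x + h)
  have hI : UniqueDiffOn ℝ I := uniqueDiffOn_Icc (by linarith)
  set G := fun k => iteratedDerivWithin k g I
  set U := fun k t => G k (x + t) + (-1) ^ k * G k (x - t)
  have hU : IsDerivChainOn U 6 (Icc 0 h) :=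
    have hG : IsDerivChainOn G 6 I := hg.isDerivChainOn_iteratedDerivWithin (n := 6) hI
    (hG.comp_const_add x fun t ht => ⟨by linarith [ht.1], by linarith [ht.2]⟩).add
      (hG.comp_const_sub x fun t ht => ⟨by linarith [ht.2], by linarith [ht.1]⟩)
  obtain ⟨s, hs, t, ht, hkey⟩ := hU.exists_compactError_eq hh
    (by norm_num [U]) (by norm_num [U]) (by norm_num [U])
  set r := max s t
  have hJ : Icc (x - r) (x + r) ⊆ Ioo (x - h) (x + h) :=
    Icc_subset_Ioo (by linarith [max_lt hs.2 ht.2]) (by linarith [max_lt hs.2 ht.2])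
  have hG6 : ContinuousOn (G 6) (Icc (x - r) (x + r)) :=
    (hg.continuousOn_iteratedDerivWithin le_rfl hI).mono (hJ.trans Ioo_subset_Icc_self)
  have hmem {u : ℝ} (hu : u ∈ Ioo 0 h) (hur : u ≤ r) : x + u ∈ Icc (x - r) (x + r) ∧
      x - u ∈ Icc (x - r) (x + r) :=
    ⟨⟨by linarith [hu.1], by linarith⟩, ⟨by linarith, by linarith [hu.1]⟩⟩
  obtain ⟨hxs, hxs'⟩ := hmem hs (le_max_left s t)
  obtain ⟨hxt, hxt'⟩ := hmem ht (le_max_right s t)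
  obtain ⟨ωs, hωs, hGs⟩ := exists_mem_Icc_eq_weighted_average hG6 hxs hxs'
    zero_le_one zero_le_one (by norm_num)
  obtain ⟨ωt, hωt, hGt⟩ := exists_mem_Icc_eq_weighted_average hG6 hxt hxt'
    zero_le_one zero_le_one (by norm_num)
  obtain ⟨ω, hω, hGω⟩ := exists_mem_Icc_eq_weighted_average (α := 8) (β := 1) hG6 hωs hωt
    (by norm_num) zero_le_one (by norm_num)
  refine ⟨ω, hJ hω, ?_⟩
  norm_num [compactError, U, G] at hkey hGs hGt hGω
  field_simp
  linear_combination 2 / 3 * hkey - 32 / 3 * h ^ 6 * hGs - 4 / 3 * h ^ 6 * hGt - 12 * h ^ 6 * hGω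
end

section
/- If u is five times continuously differentiable on [x-2h, x+2h] with h > 0, then |u'(x) − (1/(12h))·[8·u(x+h) − 8·u(x-h) + u(x-2h) − u(x+2h)]| ≤ (h⁴/18)·sup_{s ∈ [x-2h, x+2h]} |u⁽⁵⁾(s)|. -/
/-! The stencil is exact on polynomials of degree at most four, so its error at `u` is the stencil
applied to the degree-four Taylor remainder of `u` at `x`. By Lagrange's form of the remainder,
this is at most `M |t|⁵ / 120` at `x + t`, where `M` bounds `|u⁽⁵⁾|`; summing with the weights
`8, 8, 1, 1` gives `(16 h⁵ + 64 h⁵) / 120 / (12 h) · M = h⁴ / 18 · M`. -/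

open Set
open scoped Nat

theorem le_cbiSup_of_bddAbove_image {α β : Type*} [ConditionallyCompleteLattice α] {f : β → α}
    {s : Set β} (H : BddAbove (f '' s)) {c : β} (hc : c ∈ s) : f c ≤ ⨆ i ∈ s, f i :=
  le_ciSup₂ (f := fun i (_ : i ∈ s) => f i)
    (H.mono <| iUnion_subset fun _ => range_subset_iff.2 fun hi ↦ mem_image_of_mem f hi) c hc

theorem iteratedDerivWithin_subset {𝕜 F : Type*} [NontriviallyNormedField 𝕜]
    [NormedAddCommGroup F] [NormedSpace 𝕜 F] {f : 𝕜 → F} {s t : Set 𝕜} {n : ℕ} {x : 𝕜}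
    (st : s ⊆ t) (hs : UniqueDiffOn 𝕜 s) (ht : UniqueDiffOn 𝕜 t) (h : ContDiffOn 𝕜 n f t)
    (hx : x ∈ s) : iteratedDerivWithin n f s x = iteratedDerivWithin n f t x := by
  simp only [iteratedDerivWithin_eq_iteratedFDerivWithin, iteratedFDerivWithin_subset st hs ht h hx]

theorem abs_sub_taylorWithinEval_le {f : ℝ → ℝ} {s : Set ℝ} {n : ℕ} {x₀ x M : ℝ}
    (hs : UniqueDiffOn ℝ s) (hf : ContDiffOn ℝ (n + 1) f s) (hsub : uIcc x₀ x ⊆ s)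
    (hM : ∀ y ∈ s, |iteratedDerivWithin (n + 1) f s y| ≤ M) :
    |f x - taylorWithinEval f n s x₀ x| ≤ M * |x - x₀| ^ (n + 1) / (n + 1)! := by
  rcases eq_or_ne x₀ x with rfl | hne
  · simp
  have hI : UniqueDiffOn ℝ (uIcc x₀ x) := uniqueDiffOn_uIcc hne
  have hfI : ContDiffOn ℝ (n + 1) f (uIcc x₀ x) := hf.mono hsub
  have htaylor : taylorWithinEval f n s x₀ x = taylorWithinEval f n (uIcc x₀ x) x₀ x := by
    simp only [taylor_within_apply]
    refine Finset.sum_congr rfl fun k hk => ?_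
    rw [iteratedDerivWithin_subset hsub hI hs (hf.of_le ?_) left_mem_uIcc]
    exact_mod_cast (Finset.mem_range.1 hk).le
  obtain ⟨ξ, hξ, hrem⟩ := taylor_mean_remainder_lagrange hne
    (hfI.of_le (by exact_mod_cast n.le_succ))
    ((hfI.differentiableOn_iteratedDerivWithin (by exact_mod_cast n.lt_succ_self) hI).mono
      Ioo_subset_Icc_self)
  have hξs : ξ ∈ uIcc x₀ x := Ioo_subset_Icc_self hξ
  rw [htaylor, hrem, iteratedDerivWithin_subset hsub hI hs hf hξs, abs_div, abs_mul, abs_pow,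
    Nat.abs_cast]
  gcongr
  exact hM ξ (hsub hξs)

noncomputable def fivePointStencil (u : ℝ → ℝ) (x h : ℝ) : ℝ :=
  1 / (12 * h) * (8 * u (x + h) - 8 * u (x - h) + u (x - 2 * h) - u (x + 2 * h))

theorem fivePointStencil_sub (f g : ℝ → ℝ) (x h : ℝ) :
    fivePointStencil (f - g) x h = fivePointStencil f x h - fivePointStencil g x h := by
  simp only [fivePointStencil, Pi.sub_apply]
  ring

theorem abs_fivePointStencil_le (r : ℝ → ℝ) (x : ℝ) {h : ℝ} (hh : 0 < h) :
    |fivePointStencil r x h|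
      ≤ (8 * |r (x + h)| + 8 * |r (x - h)| + |r (x - 2 * h)| + |r (x + 2 * h)|) / (12 * h) := by
  rw [fivePointStencil, one_div_mul_eq_div, abs_div, abs_of_pos (by positivity : 0 < 12 * h)]
  gcongr
  calc |8 * r (x + h) - 8 * r (x - h) + r (x - 2 * h) - r (x + 2 * h)|
      ≤ |8 * r (x + h)| + |8 * r (x - h)| + |r (x - 2 * h)| + |r (x + 2 * h)| := by
        grind [abs_sub, abs_add_le]
    _ = 8 * |r (x + h)| + 8 * |r (x - h)| + |r (x - 2 * h)| + |r (x + 2 * h)| := by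
        simp only [abs_mul, abs_of_pos (by norm_num : (0 : ℝ) < 8)]

theorem abs_fivePointStencil_le_of_abs_le_pow_five {r : ℝ → ℝ} {x h K : ℝ} (hh : 0 < h)
    (hr : ∀ t, |t| ≤ 2 * h → |r (x + t)| ≤ K * |t| ^ 5) :
    |fivePointStencil r x h| ≤ 20 / 3 * K * h ^ 4 := by
  have h2h : |2 * h| = 2 * h := abs_of_pos (by positivity)
  calc |fivePointStencil r x h|
      ≤ (8 * |r (x + h)| + 8 * |r (x - h)| + |r (x - 2 * h)| + |r (x + 2 * h)|) / (12 * h) :=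
        abs_fivePointStencil_le r x hh
    _ ≤ (8 * (K * h ^ 5) + 8 * (K * h ^ 5) + K * (2 * h) ^ 5 + K * (2 * h) ^ 5) / (12 * h) := by
        rw [sub_eq_add_neg x h, sub_eq_add_neg x (2 * h)]
        gcongr
        · simpa [abs_of_pos hh] using hr h (by linarith [abs_of_pos hh])
        · simpa [abs_of_pos hh] using hr (-h) (by rw [abs_neg]; linarith [abs_of_pos hh])
        · simpa [h2h] using hr (-(2 * h)) (by rw [abs_neg, h2h])
        · simpa [h2h] using hr (2 * h) h2h.le
    _ = 20 / 3 * K * h ^ 4 := by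
        field_simp
        ring

theorem fivePointStencil_taylorWithinEval (f : ℝ → ℝ) (s : Set ℝ) (x : ℝ) {h : ℝ} (hh : h ≠ 0) :
    fivePointStencil (taylorWithinEval f 4 s x) x h = derivWithin f s x := by
  simp only [fivePointStencil, taylor_within_apply, Finset.sum_range_succ, Finset.sum_range_zero,
    iteratedDerivWithin_one, smul_eq_mul]
  field_simp
  norm_num [Nat.factorial]
  ring

/-- The collocation-polynomial numerical gradient formula
P = (1/(12h))·[8u(x+h) − 8u(x−h) + u(x−2h) − u(x+2h)]
is fourth-order accurate for the first derivative. -/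
theorem numerical_gradient_fourth_order
    (u : ℝ → ℝ) (x h : ℝ) (hh : 0 < h)
    (hu : ContDiffOn ℝ 5 u (Set.Icc (x - 2 * h) (x + 2 * h))) :
    |derivWithin u (Set.Icc (x - 2 * h) (x + 2 * h)) x
        - (1 / (12 * h)) * (8 * u (x + h) - 8 * u (x - h)
            + u (x - 2 * h) - u (x + 2 * h))|
      ≤ (h ^ 4 / 18) * ⨆ s ∈ Set.Icc (x - 2 * h) (x + 2 * h),
          |iteratedDerivWithin 5 u (Set.Icc (x - 2 * h) (x + 2 * h)) s| := by
  set I := Icc (x - 2 * h) (x + 2 * h)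
  set M := ⨆ y ∈ I, |iteratedDerivWithin 5 u I y|
  set T := taylorWithinEval u 4 I x
  have hI : UniqueDiffOn ℝ I := uniqueDiffOn_Icc (by linarith)
  have hM : ∀ y ∈ I, |iteratedDerivWithin 5 u I y| ≤ M := fun y hy =>
    le_cbiSup_of_bddAbove_image
      (isCompact_Icc.bddAbove_image (hu.continuousOn_iteratedDerivWithin le_rfl hI).abs) hy
  have hR : ∀ t, |t| ≤ 2 * h → |(T - u) (x + t)| ≤ M / 120 * |t| ^ 5 := by
    intro t ht
    have hxI : x ∈ I := ⟨by linarith, by linarith⟩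
    have htI : x + t ∈ I := ⟨by linarith [neg_abs_le t], by linarith [le_abs_self t]⟩
    have h5 := abs_sub_taylorWithinEval_le (n := 4) hI hu (uIcc_subset_Icc hxI htI) hM
    rw [add_sub_cancel_left, abs_sub_comm] at h5
    exact h5.trans_eq (by norm_num [Nat.factorial]; ring)
  calc |derivWithin u I x - fivePointStencil u x h|
      = |fivePointStencil (T - u) x h| := by
        rw [fivePointStencil_sub, fivePointStencil_taylorWithinEval u I x hh.ne']
    _ ≤ 20 / 3 * (M / 120) * h ^ 4 := abs_fivePointStencil_le_of_abs_le_pow_five hh hR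
    _ = h ^ 4 / 18 * M := by ring
end

section
/- Let u be four times continuously differentiable on [a, a+h] with h > 0, and let P, Q be real numbers with |P − u'(a)| ≤ ε and |Q − u'(a+h)| ≤ ε for some ε ≥ 0. Then the refined intermediate value û = (1/2)·(u(a) + u(a+h)) + (h/8)·(P − Q) satisfies |u(a + h/2) − û| ≤ (h⁴/384)·sup_{s ∈ [a, a+h]} |u⁗(s)| + (h/4)·ε. -/
/-!
With `m = a + h/2`, the midpoint error of the cubic Hermite interpolant on `[m - t, m + t]`,
`E(t) = u(m) - (u(m-t) + u(m+t))/2 - (t/4)(u'(m-t) - u'(m+t))`, satisfies `E(0) = E'(0) = 0`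
and `E''(t) = (t/4)(u'''(m+t) - u'''(m-t))`, so `|E''(t)| ≤ M t²/2` where `M = sup |u⁗|`.
Two applications of the mean value inequality give `|E(h/2)| ≤ M (h/2)⁴/24 = M h⁴/384`, and
replacing `u'(a)`, `u'(a+h)` by `P`, `Q` costs at most `(h/8)(ε + ε)`.
-/

open Set

theorem IsCompact.le_biSup_of_continuousOn {X : Type*} [TopologicalSpace X] {s : Set X}
    (hs : IsCompact s) {f : X → ℝ} (hf : ContinuousOn f s) {x : X} (hx : x ∈ s) :
    f x ≤ ⨆ y ∈ s, f y := by
  refine le_ciSup₂ (f := fun y (_ : y ∈ s) => f y) ((hs.bddAbove_image hf).mono ?_) x hx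
  simp only [iUnion_subset_iff, range_subset_iff]
  exact fun y hy => mem_image_of_mem f hy

theorem hasDerivAt_iteratedDerivWithin {u : ℝ → ℝ} {s : Set ℝ} {n : WithTop ℕ∞} {k : ℕ}
    (hu : ContDiffOn ℝ n u s) (hs : UniqueDiffOn ℝ s) (hk : k < n) {x : ℝ} (hx : s ∈ nhds x) :
    HasDerivAt (iteratedDerivWithin k u s) (iteratedDerivWithin (k + 1) u s x) x := by
  rw [iteratedDerivWithin_succ]
  exact ((hu.differentiableOn_iteratedDerivWithin hk hs x
    (mem_of_mem_nhds hx)).hasDerivWithinAt).hasDerivAt hx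

theorem abs_le_mul_pow_of_abs_deriv_le {f f' : ℝ → ℝ} {T C : ℝ} {n : ℕ} (hf0 : f 0 = 0)
    (hf : ContinuousOn f (Icc 0 T)) (hf' : ∀ t ∈ Ico 0 T, HasDerivAt f (f' t) t)
    (bound : ∀ t ∈ Ico 0 T, |f' t| ≤ (n + 1) * C * t ^ n) :
    ∀ t ∈ Icc 0 T, |f t| ≤ C * t ^ (n + 1) := by
  refine image_norm_le_of_norm_deriv_right_le_deriv_boundary hf
    (fun t ht => (hf' t ht).hasDerivWithinAt) (by simp [hf0]) (fun t => ?_) bound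
  refine ((hasDerivAt_pow (n + 1) t).const_mul C).congr_deriv ?_
  push_cast
  ring

namespace HermiteMidpoint

/-- With `w k` in the role of `u⁽ᵏ⁾`: the error at `m` of the cubic Hermite interpolant of `u`
on `[m - t, m + t]`. -/
noncomputable def defect (w : ℕ → ℝ → ℝ) (m t : ℝ) : ℝ :=
  w 0 m - (w 0 (m - t) + w 0 (m + t)) / 2 - t / 4 * (w 1 (m - t) - w 1 (m + t))

noncomputable def defectDeriv (w : ℕ → ℝ → ℝ) (m t : ℝ) : ℝ :=
  (w 1 (m - t) - w 1 (m + t)) / 4 + t / 4 * (w 2 (m - t) + w 2 (m + t))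

variable {w : ℕ → ℝ → ℝ} {m t T : ℝ}

theorem defect_zero : defect w m 0 = 0 := by simp [defect]

theorem defectDeriv_zero : defectDeriv w m 0 = 0 := by simp [defectDeriv]

theorem hasDerivAt_comp_sub_add {f f' : ℝ → ℝ} (hm : HasDerivAt f (f' (m - t)) (m - t))
    (hp : HasDerivAt f (f' (m + t)) (m + t)) :
    HasDerivAt (fun t => f (m - t) + f (m + t)) (f' (m + t) - f' (m - t)) t :=
  ((hm.comp_const_sub m t).fun_add (hp.comp_const_add m t)).congr_deriv (neg_add_eq_sub _ _)

theorem hasDerivAt_comp_sub_sub {f f' : ℝ → ℝ} (hm : HasDerivAt f (f' (m - t)) (m - t))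
    (hp : HasDerivAt f (f' (m + t)) (m + t)) :
    HasDerivAt (fun t => f (m - t) - f (m + t)) (-(f' (m - t) + f' (m + t))) t :=
  ((hm.comp_const_sub m t).fun_sub (hp.comp_const_add m t)).congr_deriv (neg_add' _ _).symm

theorem hasDerivAt_defect
    (hw : ∀ k < 2, HasDerivAt (w k) (w (k + 1) (m - t)) (m - t) ∧
      HasDerivAt (w k) (w (k + 1) (m + t)) (m + t)) :
    HasDerivAt (defect w m) (defectDeriv w m t) t := by
  have h0 := hasDerivAt_comp_sub_add (hw 0 (by norm_num)).1 (hw 0 (by norm_num)).2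
  have h1 := hasDerivAt_comp_sub_sub (hw 1 (by norm_num)).1 (hw 1 (by norm_num)).2
  refine (((hasDerivAt_const t (w 0 m)).sub (h0.div_const 2)).sub
    (((hasDerivAt_id t).div_const 4).mul h1)).congr_deriv ?_
  simp only [defectDeriv, id]
  ring

theorem hasDerivAt_defectDeriv
    (hw : ∀ k < 2, HasDerivAt (w (k + 1)) (w (k + 2) (m - t)) (m - t) ∧
      HasDerivAt (w (k + 1)) (w (k + 2) (m + t)) (m + t)) :
    HasDerivAt (defectDeriv w m) (t / 4 * (w 3 (m + t) - w 3 (m - t))) t := by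
  have h1 := hasDerivAt_comp_sub_sub (hw 0 (by norm_num)).1 (hw 0 (by norm_num)).2
  have h2 := hasDerivAt_comp_sub_add (hw 1 (by norm_num)).1 (hw 1 (by norm_num)).2
  refine ((h1.div_const 4).add (((hasDerivAt_id t).div_const 4).mul h2)).congr_deriv ?_
  simp only [id]
  ring

theorem continuousOn_comp_sub_and_add {f : ℝ → ℝ} (hf : ContinuousOn f (Icc (m - T) (m + T))) :
    ContinuousOn (fun t => f (m - t)) (Icc 0 T) ∧ ContinuousOn (fun t => f (m + t)) (Icc 0 T) :=
  ⟨hf.comp (continuousOn_const.sub continuousOn_id) fun t ⟨h0, htT⟩ => ⟨by linarith, by linarith⟩,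
    hf.comp (continuousOn_const.add continuousOn_id) fun t ⟨h0, htT⟩ => ⟨by linarith, by linarith⟩⟩

theorem continuousOn_defect (hw : ∀ k < 2, ContinuousOn (w k) (Icc (m - T) (m + T))) :
    ContinuousOn (defect w m) (Icc 0 T) := by
  obtain ⟨h0m, h0p⟩ := continuousOn_comp_sub_and_add (hw 0 (by norm_num))
  obtain ⟨h1m, h1p⟩ := continuousOn_comp_sub_and_add (hw 1 (by norm_num))
  exact (continuousOn_const.sub ((h0m.add h0p).div_const 2)).sub
    ((continuousOn_id.div_const 4).mul (h1m.sub h1p))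

theorem continuousOn_defectDeriv (hw : ∀ k < 2, ContinuousOn (w (k + 1)) (Icc (m - T) (m + T))) :
    ContinuousOn (defectDeriv w m) (Icc 0 T) := by
  obtain ⟨h1m, h1p⟩ := continuousOn_comp_sub_and_add (hw 0 (by norm_num))
  obtain ⟨h2m, h2p⟩ := continuousOn_comp_sub_and_add (hw 1 (by norm_num))
  exact ((h1m.sub h1p).div_const 4).add ((continuousOn_id.div_const 4).mul (h2m.add h2p))

theorem abs_defect_le {M : ℝ} (hT : 0 ≤ T)
    (hcont : ∀ k < 3, ContinuousOn (w k) (Icc (m - T) (m + T)))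
    (hderiv : ∀ k < 3, ∀ x ∈ Ioo (m - T) (m + T), HasDerivAt (w k) (w (k + 1) x) x)
    (hlip : ∀ x ∈ Ioo (m - T) (m + T), ∀ y ∈ Ioo (m - T) (m + T),
      |w 3 y - w 3 x| ≤ M * |y - x|) :
    |defect w m T| ≤ M / 24 * T ^ 4 := by
  have hmem : ∀ t ∈ Ico 0 T, m - t ∈ Ioo (m - T) (m + T) ∧ m + t ∈ Ioo (m - T) (m + T) :=
    fun t ⟨h0, htT⟩ => ⟨⟨by linarith, by linarith⟩, ⟨by linarith, by linarith⟩⟩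
  have hw : ∀ t ∈ Ico 0 T, ∀ k < 3, HasDerivAt (w k) (w (k + 1) (m - t)) (m - t) ∧
      HasDerivAt (w k) (w (k + 1) (m + t)) (m + t) :=
    fun t ht k hk => ⟨hderiv k hk _ (hmem t ht).1, hderiv k hk _ (hmem t ht).2⟩
  have hG : ∀ t ∈ Icc 0 T, |defectDeriv w m t| ≤ M / 6 * t ^ 3 := by
    refine abs_le_mul_pow_of_abs_deriv_le (n := 2) defectDeriv_zero
      (continuousOn_defectDeriv fun k hk => hcont (k + 1) (by omega))
      (fun t ht => hasDerivAt_defectDeriv fun k hk => hw t ht (k + 1) (by omega)) fun t ht => ?_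
    have h3 := hlip _ (hmem t ht).1 _ (hmem t ht).2
    rw [show m + t - (m - t) = 2 * t by ring, abs_of_nonneg (by linarith [ht.1] : 0 ≤ 2 * t)]
      at h3
    rw [abs_mul, abs_of_nonneg (by linarith [ht.1] : 0 ≤ t / 4)]
    push_cast
    nlinarith [ht.1]
  refine abs_le_mul_pow_of_abs_deriv_le (n := 3) defect_zero
    (continuousOn_defect fun k hk => hcont k (by omega))
    (fun t ht => hasDerivAt_defect fun k hk => hw t ht k (by omega)) (fun t ht => ?_) T ⟨hT, le_rfl⟩
  push_cast
  linarith [hG t (Ico_subset_Icc_self ht)]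

end HermiteMidpoint

theorem abs_hermite_midpoint_error_le {u : ℝ → ℝ} {a h : ℝ} (hh : 0 < h)
    (hu : ContDiffOn ℝ 4 u (Icc a (a + h))) :
    |u (a + h / 2) - (1 / 2 * (u a + u (a + h)) + h / 8 *
        (derivWithin u (Icc a (a + h)) a - derivWithin u (Icc a (a + h)) (a + h)))|
      ≤ h ^ 4 / 384 * ⨆ s ∈ Icc a (a + h), |iteratedDerivWithin 4 u (Icc a (a + h)) s| := by
  set I := Icc a (a + h)
  set M := ⨆ s ∈ I, |iteratedDerivWithin 4 u I s|
  set w : ℕ → ℝ → ℝ := fun k => iteratedDerivWithin k u I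
  have hI : UniqueDiffOn ℝ I := uniqueDiffOn_Icc (by linarith)
  have hderiv : ∀ k < 4, ∀ x ∈ Ioo a (a + h), HasDerivAt (w k) (w (k + 1) x) x :=
    fun k hk x hx => hasDerivAt_iteratedDerivWithin hu hI (by exact_mod_cast hk)
      (Icc_mem_nhds hx.1 hx.2)
  have hlip : ∀ x ∈ Ioo a (a + h), ∀ y ∈ Ioo a (a + h), |w 3 y - w 3 x| ≤ M * |y - x| :=
    fun x hx y hy => (convex_Ioo a (a + h)).norm_image_sub_le_of_norm_hasDerivWithin_le
      (fun z hz => (hderiv 3 (by norm_num) z hz).hasDerivWithinAt)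
      (fun z hz => isCompact_Icc.le_biSup_of_continuousOn
        (hu.continuousOn_iteratedDerivWithin le_rfl hI).abs (Ioo_subset_Icc_self hz)) hx hy
  have ha : a + h / 2 - h / 2 = a := by ring
  have hb : a + h / 2 + h / 2 = a + h := by ring
  have hdefect : |HermiteMidpoint.defect w (a + h / 2) (h / 2)| ≤ M / 24 * (h / 2) ^ 4 := by
    refine HermiteMidpoint.abs_defect_le (by positivity) ?_ (fun k hk => ?_) ?_ <;> rw [ha, hb]
    · exact fun k hk => hu.continuousOn_iteratedDerivWithin (by norm_cast; omega) hI
    · exact hderiv k (by omega)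
    · exact hlip
  convert hdefect using 1
  · congr 1
    simp only [HermiteMidpoint.defect, w, iteratedDerivWithin_zero, iteratedDerivWithin_one, ha, hb]
    ring
  · ring

theorem refined_midpoint_error_general
    (u : ℝ → ℝ) (a h : ℝ) (hh : 0 < h)
    (hu : ContDiffOn ℝ 4 u (Set.Icc a (a + h)))
    (P Q ε : ℝ)
    (hP : |P - derivWithin u (Set.Icc a (a + h)) a| ≤ ε)
    (hQ : |Q - derivWithin u (Set.Icc a (a + h)) (a + h)| ≤ ε) :
    |u (a + h / 2) - ((1 / 2) * (u a + u (a + h)) + (h / 8) * (P - Q))|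
      ≤ (h ^ 4 / 384) * (⨆ s ∈ Set.Icc a (a + h),
          |iteratedDerivWithin 4 u (Set.Icc a (a + h)) s|) + (h / 4) * ε := by
  set D₁ := derivWithin u (Icc a (a + h)) a
  set D₂ := derivWithin u (Icc a (a + h)) (a + h)
  have hsplit : u (a + h / 2) - ((1 / 2) * (u a + u (a + h)) + (h / 8) * (P - Q))
      = u (a + h / 2) - (1 / 2 * (u a + u (a + h)) + h / 8 * (D₁ - D₂))
        - h / 8 * ((P - D₁) - (Q - D₂)) := by ring
  have hperturb : |h / 8 * ((P - D₁) - (Q - D₂))| ≤ h / 8 * (ε + ε) := by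
    rw [abs_mul, abs_of_pos (by positivity : 0 < h / 8)]
    gcongr
    exact (abs_sub _ _).trans (add_le_add hP hQ)
  rw [hsplit]
  linarith [abs_sub (u (a + h / 2) - (1 / 2 * (u a + u (a + h)) + h / 8 * (D₁ - D₂)))
    (h / 8 * ((P - D₁) - (Q - D₂))), abs_hermite_midpoint_error_le hh hu]

/-- Midpoint refinement with approximate endpoint derivatives: if `P` and `Q`
approximate `u'(a)` and `u'(a+h)` within `ε`, the refined intermediate value
û = (1/2)(u(a)+u(a+h)) + (h/8)(P − Q) approximates `u(a + h/2)` with the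
Hermite interpolation error plus `(h/4)·ε`. -/
theorem refined_midpoint_error
    (u : ℝ → ℝ) (a h : ℝ) (hh : 0 < h)
    (hu : ContDiffOn ℝ 4 u (Set.Icc a (a + h)))
    (P Q ε : ℝ) (hε : 0 ≤ ε)
    (hP : |P - derivWithin u (Set.Icc a (a + h)) a| ≤ ε)
    (hQ : |Q - derivWithin u (Set.Icc a (a + h)) (a + h)| ≤ ε) :
    |u (a + h / 2) - ((1 / 2) * (u a + u (a + h)) + (h / 8) * (P - Q))|
      ≤ (h ^ 4 / 384) * (⨆ s ∈ Set.Icc a (a + h),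
          |iteratedDerivWithin 4 u (Set.Icc a (a + h)) s|) + (h / 4) * ε :=
  refined_midpoint_error_general u a h hh hu P Q ε hP hQ
end
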